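/- Let B ∈ {-1,0,1}^{m×n} and suppose B_{ij} = 0. If the sign s ∈ {-1,+1} is added as the new value of B_{ij}, then the number of balanced butterflies (4-cycles through the new edge with even number of negative edges) created minus the number of unbalanced butterflies created equals s · (B B^T B)_{ij}. Consequently, choosing s = sign((B B^T B)_{ij}) maximizes the net gain of balanced butterflies, and this net gain equals |(B B^T B)_{ij}|. -/

import Mathlib

/-!
Expanding `(B * Bᵀ * B) i j = ∑ k l, B i l * B k l * B k j`, each term, multiplied by `s`, is
the sign product of the 4-cycle `(i, l, k, j)` closed by the new edge: `1` for a balanced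
butterfly, `-1` for an unbalanced one and `0` when one of the three old edges is missing.
Summing a `{-1, 0, 1}`-valued function counts its `1`s minus its `-1`s, and `s * x ≤ |x|`
for `s = ±1`, with equality at `s = sign x`.
-/

open Matrix Finset

theorem Finset.natCast_card_filter_eq_one_sub_card_filter_eq_neg_one {α : Type*}
    (s : Finset α) (f : α → ℤ) (hf : ∀ a ∈ s, |f a| ≤ 1) :
    (#(s.filter (f · = 1)) : ℤ) - #(s.filter (f · = -1)) = ∑ a ∈ s, f a := by
  rw [natCast_card_filter, natCast_card_filter, ← sum_sub_distrib]
  refine sum_congr rfl fun a ha => ?_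
  obtain ⟨hlo, hhi⟩ := abs_le.mp (hf a ha)
  interval_cases f a <;> simp

namespace Matrix

variable {ι κ : Type*}

def butterflySign {R : Type*} [Mul R] (B : Matrix ι κ R) (s : R) (i : ι) (j : κ)
    (p : ι × κ) : R :=
  s * B i p.2 * B p.1 p.2 * B p.1 j

theorem sum_butterflySign [Fintype ι] [Fintype κ] {R : Type*} [CommSemiring R]
    (B : Matrix ι κ R) (s : R) (i : ι) (j : κ) : ∑ p, butterflySign B s i j p = s * (B * Bᵀ * B) i j := by
  simp only [butterflySign, mul_apply, transpose_apply, mul_sum, sum_mul,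
    Fintype.sum_prod_type]
  exact sum_congr rfl fun k _ => sum_congr rfl fun l _ => by ring

theorem filter_butterflySign_eq [Fintype ι] [Fintype κ] {R : Type*} [MulZeroClass R]
    [DecidableEq R] (B : Matrix ι κ R) (s : R) (i : ι) (j : κ) {u : R} (hu : u ≠ 0) :
    univ.filter (fun p : ι × κ => B i p.2 ≠ 0 ∧ B p.1 p.2 ≠ 0 ∧ B p.1 j ≠ 0 ∧
        s * B i p.2 * B p.1 p.2 * B p.1 j = u) =
      univ.filter (butterflySign B s i j · = u) := by
  refine filter_congr fun p _ => ⟨fun h => h.2.2.2, fun h => ?_⟩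
  refine ⟨fun h0 => hu ?_, fun h0 => hu ?_, fun h0 => hu ?_, h⟩ <;>
    simp [← h, butterflySign, h0]

theorem abs_butterflySign_le_one (B : Matrix ι κ ℤ) (hB : ∀ k l, |B k l| ≤ 1) {s : ℤ}
    (hs : |s| ≤ 1) (i : ι) (j : κ) (p : ι × κ) : |butterflySign B s i j p| ≤ 1 := by
  simp only [butterflySign, abs_mul]
  exact mul_le_one₀ (mul_le_one₀ (mul_le_one₀ hs (abs_nonneg _) (hB _ _))
    (by positivity) (hB _ _)) (by positivity) (hB _ _)

end Matrix

theorem Int.mul_le_abs_of_abs_eq_one {s : ℤ} (hs : |s| = 1) (x : ℤ) : s * x ≤ |x| := by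
  simpa [abs_mul, hs] using le_abs_self (s * x)

theorem adding_sign_net_balanced_butterflies_general {m n : ℕ} (B : Matrix (Fin m) (Fin n) ℤ)
    (hent : ∀ i j, B i j = -1 ∨ B i j = 0 ∨ B i j = 1) (i : Fin m) (j : Fin n) :
    (∀ s : ℤ, s = -1 ∨ s = 1 →
      ((Finset.univ.filter (fun p : Fin m × Fin n =>
          B i p.2 ≠ 0 ∧ B p.1 p.2 ≠ 0 ∧ B p.1 j ≠ 0 ∧
          s * B i p.2 * B p.1 p.2 * B p.1 j = 1)).card : ℤ) -
      ((Finset.univ.filter (fun p : Fin m × Fin n =>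
          B i p.2 ≠ 0 ∧ B p.1 p.2 ≠ 0 ∧ B p.1 j ≠ 0 ∧
          s * B i p.2 * B p.1 p.2 * B p.1 j = -1)).card : ℤ) =
        s * (B * Bᵀ * B) i j) ∧
    Int.sign ((B * Bᵀ * B) i j) * (B * Bᵀ * B) i j = |(B * Bᵀ * B) i j| ∧
    (∀ s : ℤ, s = -1 ∨ s = 1 → s * (B * Bᵀ * B) i j ≤ |(B * Bᵀ * B) i j|) := by
  have abs_s : ∀ s : ℤ, s = -1 ∨ s = 1 → |s| = 1 := by
    rintro s (rfl | rfl) <;> rfl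
  have abs_B : ∀ k l, |B k l| ≤ 1 := fun k l => by
    rcases hent k l with h | h | h <;> simp [h]
  refine ⟨fun s hs => ?_, Int.sign_mul_self_eq_abs _,
    fun s hs => Int.mul_le_abs_of_abs_eq_one (abs_s s hs) _⟩
  rw [filter_butterflySign_eq B s i j one_ne_zero,
    filter_butterflySign_eq B s i j (neg_ne_zero.mpr one_ne_zero),
    natCast_card_filter_eq_one_sub_card_filter_eq_neg_one _ _
      fun p _ => abs_butterflySign_le_one B abs_B (abs_s s hs).le i j p,
    sum_butterflySign]

/-- Adding a link of sign `s` at a non-edge `(i,j)` creates a net gain of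
`s * (B * Bᵀ * B) i j` balanced butterflies (balanced minus unbalanced), so taking
`s = sign ((B * Bᵀ * B) i j)` maximizes the net gain, which then equals
`|(B * Bᵀ * B) i j|`. -/
theorem adding_sign_net_balanced_butterflies {m n : ℕ} (B : Matrix (Fin m) (Fin n) ℤ)
    (hent : ∀ i j, B i j = -1 ∨ B i j = 0 ∨ B i j = 1) (i : Fin m) (j : Fin n)
    (hij : B i j = 0) :
    (∀ s : ℤ, s = -1 ∨ s = 1 →
      ((Finset.univ.filter (fun p : Fin m × Fin n =>
          B i p.2 ≠ 0 ∧ B p.1 p.2 ≠ 0 ∧ B p.1 j ≠ 0 ∧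
          s * B i p.2 * B p.1 p.2 * B p.1 j = 1)).card : ℤ) -
      ((Finset.univ.filter (fun p : Fin m × Fin n =>
          B i p.2 ≠ 0 ∧ B p.1 p.2 ≠ 0 ∧ B p.1 j ≠ 0 ∧
          s * B i p.2 * B p.1 p.2 * B p.1 j = -1)).card : ℤ) =
        s * (B * Bᵀ * B) i j) ∧
    Int.sign ((B * Bᵀ * B) i j) * (B * Bᵀ * B) i j = |(B * Bᵀ * B) i j| ∧
    (∀ s : ℤ, s = -1 ∨ s = 1 → s * (B * Bᵀ * B) i j ≤ |(B * Bᵀ * B) i j|) :=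
  adding_sign_net_balanced_butterflies_general B hent i j
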